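/- arXiv:1612.04671 — 2 statements merged into one kernel-verified Lean document; each statement's English description precedes it below -/
import Mathlib

section
/- Let b, d > 0 with sin(√b·d) ≠ 0, u₀(z) = sin(√b·z)/sin(√b·d), and let ω₁ be continuously differentiable with ω₁(0) = ω₁(u₀(d)) = ω₁(1) = 0. If u₁ solves u₁'' + b·u₁ = −ω₁(u₀), u₁(0) = u₁(d) = 0, then u₁'(d) = −(1/sin(√b·d))·∫₀ᵈ ω₁(u₀(z))·sin(√b·z) dz = −∫₀ᵈ ω₁'(u₀(z))·cos²(√b·z)/sin²(√b·d) dz. -/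
/-!
Multiplying the equation by `sin (√b z)`, which solves the homogeneous equation and vanishes at
`0`, and integrating by parts twice (the Wronskian of `u₁` and `sin (√b z)`) leaves only the
boundary term `u₁'(d) sin (√b d)`. For the second form, integrate `ω₁(u₀ z) sin (√b z)` by parts
once more against `-cos (√b z) / √b`; the boundary terms vanish because `ω₁(u₀ 0) = ω₁(u₀ d) = 0`.
-/

open Real Set intervalIntegral

theorem integral_deriv_deriv_add_sq_mul_mul_sin {u : ℝ → ℝ} (hu : ContDiff ℝ 2 u) (s a b : ℝ) :
    ∫ z in a..b, (deriv (deriv u) z + s ^ 2 * u z) * sin (s * z) =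
      (deriv u b * sin (s * b) - s * u b * cos (s * b)) -
        (deriv u a * sin (s * a) - s * u a * cos (s * a)) := by
  have hu' : ContDiff ℝ 1 (deriv u) := hu.deriv'
  refine integral_eq_sub_of_hasDerivAt
    (f := fun z => deriv u z * sin (s * z) - s * u z * cos (s * z)) (fun z _ => ?_) ?_
  · have hlin : HasDerivAt (fun y => s * y) s z := by
      simpa using (hasDerivAt_id z).const_mul s
    have hW := ((hu'.differentiable one_ne_zero z).hasDerivAt.mul hlin.sin).sub
      (((hu.differentiable two_ne_zero z).hasDerivAt.const_mul s).mul hlin.cos)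
    exact hW.congr_deriv (by ring)
  · exact (((hu'.continuous_deriv_one).add (continuous_const.mul hu.continuous)).mul
      (by fun_prop)).intervalIntegrable a b

theorem integral_comp_sin_div_mul_sin {ω : ℝ → ℝ} (hω : ContDiff ℝ 1 ω) {s : ℝ} (hs : s ≠ 0)
    (c a b : ℝ) :
    ∫ z in a..b, ω (sin (s * z) / c) * sin (s * z) =
      (ω (sin (s * a) / c) * cos (s * a) - ω (sin (s * b) / c) * cos (s * b)) / s +
        (∫ z in a..b, deriv ω (sin (s * z) / c) * cos (s * z) ^ 2) / c := by
  have hlin (z : ℝ) : HasDerivAt (fun y => s * y) s z := by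
    simpa using (hasDerivAt_id z).const_mul s
  have hcont₀ : Continuous fun z => ω (sin (s * z) / c) * sin (s * z) :=
    (hω.continuous.comp (by fun_prop)).mul (by fun_prop)
  have hcont : Continuous fun z => deriv ω (sin (s * z) / c) * cos (s * z) ^ 2 :=
    (hω.continuous_deriv_one.comp (by fun_prop)).mul (by fun_prop)
  have hparts : ∫ z in a..b, (ω (sin (s * z) / c) * sin (s * z) -
      deriv ω (sin (s * z) / c) * cos (s * z) ^ 2 / c) =
      ω (sin (s * b) / c) * (-cos (s * b) / s) - ω (sin (s * a) / c) * (-cos (s * a) / s) := by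
    refine integral_eq_sub_of_hasDerivAt
      (f := fun z => ω (sin (s * z) / c) * (-cos (s * z) / s)) (fun z _ => ?_) ?_
    · have hω' := (hω.differentiable one_ne_zero _).hasDerivAt.comp z ((hlin z).sin.div_const c)
      refine (hω'.mul ((hlin z).cos.neg.div_const s)).congr_deriv ?_
      simp only [Function.comp_apply, Pi.neg_apply]
      field_simp
      ring
    · exact (hcont₀.sub (hcont.div_const c)).intervalIntegrable a b
  rw [integral_sub (hcont₀.intervalIntegrable a b) ((hcont.div_const c).intervalIntegrable a b),
    integral_div] at hparts
  linear_combination hparts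

theorem stmt_2_general (b d : ℝ) (hb : 0 < b) (hd : 0 < d)
    (hsin : Real.sin (Real.sqrt b * d) ≠ 0)
    (u₀ : ℝ → ℝ) (hu₀ : u₀ = fun z => Real.sin (Real.sqrt b * z) / Real.sin (Real.sqrt b * d))
    (ω₁ : ℝ → ℝ) (hω₁ : ContDiff ℝ 1 ω₁)
    (hω₁0 : ω₁ 0 = 0) (hω₁d : ω₁ (u₀ d) = 0)
    (u₁ : ℝ → ℝ) (hu₁ : ContDiff ℝ 2 u₁)
    (hode : ∀ z ∈ Set.Icc (0:ℝ) d, deriv (deriv u₁) z + b * u₁ z = - ω₁ (u₀ z))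
    (h0 : u₁ 0 = 0) (hdd : u₁ d = 0) :
    deriv u₁ d = -(1 / Real.sin (Real.sqrt b * d)) *
        ∫ z in (0:ℝ)..d, ω₁ (u₀ z) * Real.sin (Real.sqrt b * z) ∧
    deriv u₁ d = - ∫ z in (0:ℝ)..d,
        deriv ω₁ (u₀ z) * Real.cos (Real.sqrt b * z) ^ 2 / Real.sin (Real.sqrt b * d) ^ 2 := by
  subst hu₀
  set s := √b
  have hs : s ≠ 0 := (sqrt_pos.mpr hb).ne'
  have hwronskian : deriv u₁ d * sin (s * d) =
      -∫ z in (0:ℝ)..d, ω₁ (sin (s * z) / sin (s * d)) * sin (s * z) := by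
    rw [← integral_neg]
    have hode' : EqOn (fun z => (deriv (deriv u₁) z + s ^ 2 * u₁ z) * sin (s * z))
        (fun z => -(ω₁ (sin (s * z) / sin (s * d)) * sin (s * z))) (uIcc 0 d) := by
      intro z hz
      rw [uIcc_of_le hd.le] at hz
      simp only [s, sq_sqrt hb.le, hode z hz, neg_mul]
    rw [← integral_congr hode', integral_deriv_deriv_add_sq_mul_mul_sin hu₁]
    simp [h0, hdd]
  have hparts := integral_comp_sin_div_mul_sin hω₁ hs (sin (s * d)) 0 d
  simp only [mul_zero, sin_zero, zero_div, hω₁0, hω₁d, zero_mul, sub_zero, zero_add] at hparts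
  have hderiv := eq_div_of_mul_eq hsin hwronskian
  refine ⟨by rw [hderiv]; ring, ?_⟩
  rw [hderiv, hparts, integral_div]
  ring

theorem stmt_2 (b d : ℝ) (hb : 0 < b) (hd : 0 < d)
    (hsin : Real.sin (Real.sqrt b * d) ≠ 0)
    (u₀ : ℝ → ℝ) (hu₀ : u₀ = fun z => Real.sin (Real.sqrt b * z) / Real.sin (Real.sqrt b * d))
    (ω₁ : ℝ → ℝ) (hω₁ : ContDiff ℝ 1 ω₁)
    (hω₁0 : ω₁ 0 = 0) (hω₁d : ω₁ (u₀ d) = 0) (hω₁1 : ω₁ 1 = 0)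
    (u₁ : ℝ → ℝ) (hu₁ : ContDiff ℝ 2 u₁)
    (hode : ∀ z ∈ Set.Icc (0:ℝ) d, deriv (deriv u₁) z + b * u₁ z = - ω₁ (u₀ z))
    (h0 : u₁ 0 = 0) (hdd : u₁ d = 0) :
    deriv u₁ d = -(1 / Real.sin (Real.sqrt b * d)) *
        ∫ z in (0:ℝ)..d, ω₁ (u₀ z) * Real.sin (Real.sqrt b * z) ∧
    deriv u₁ d = - ∫ z in (0:ℝ)..d,
        deriv ω₁ (u₀ z) * Real.cos (Real.sqrt b * z) ^ 2 / Real.sin (Real.sqrt b * d) ^ 2 :=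
  stmt_2_general b d hb hd hsin u₀ hu₀ ω₁ hω₁ hω₁0 hω₁d u₁ hu₁ hode h0 hdd
end

section
/- Let b, d > 0 with b + μ > 0 for a real number μ, and let κ ∈ ℝ. The Sturm-Liouville problem −φ'' − b·φ = μ·φ on (0,d), φ(0) = 0, φ'(d) = κ·φ(d) has a nontrivial solution if and only if √(b+μ)·cos(√(b+μ)·d) = κ·sin(√(b+μ)·d). -/
/-!
Write `ω = √(b + μ)`, so the equation reads `φ'' = -ω² φ`. For a solution `u` with
`u(0) = u'(0) = 0` the energy `u'² + ω² u²` has derivative `2 u' (u'' + ω² u) = 0`, hence vanishes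
on `[0, d]`; applied to `u = φ - (φ'(0)/ω) sin(ω ·)` this shows that every solution with `φ(0) = 0`
is a multiple of `sin(ω ·)`, nontrivial exactly when `φ'(0) ≠ 0`. The Robin condition at `d` on
`sin(ω ·)` is the dispersion relation.
-/

open Real Set

lemma eq_left_of_hasDerivAt_eq_zero {f : ℝ → ℝ} {a b x : ℝ} (hf : ContinuousOn f (Icc a b))
    (hf' : ∀ y ∈ Ioo a b, HasDerivAt f 0 y) (hx : x ∈ Icc a b) : f x = f a := by
  rcases hx.1.eq_or_lt with rfl | hax
  · rfl
  obtain ⟨c, -, hc⟩ := exists_hasDerivAt_eq_slope f (fun _ => 0) hax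
    (hf.mono (Icc_subset_Icc_right hx.2)) fun y hy => hf' y ⟨hy.1, hy.2.trans_le hx.2⟩
  rw [eq_comm, div_eq_zero_iff, sub_eq_zero, sub_eq_zero] at hc
  exact hc.resolve_right hax.ne'

lemma eq_zero_of_deriv_deriv_eq_neg_sq_mul {u : ℝ → ℝ} {ω a b x : ℝ} (hω : ω ≠ 0)
    (hu : ContDiff ℝ 2 u) (hode : ∀ z ∈ Ioo a b, deriv (deriv u) z = -ω ^ 2 * u z)
    (ha : u a = 0) (ha' : deriv u a = 0) (hx : x ∈ Icc a b) : u x = 0 ∧ deriv u x = 0 := by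
  have hu₁ : Differentiable ℝ u := hu.differentiable (by norm_num)
  have hu₂ : Differentiable ℝ (deriv u) := hu.differentiable_deriv_two
  set E : ℝ → ℝ := fun z => deriv u z ^ 2 + ω ^ 2 * u z ^ 2
  have hE' : ∀ z ∈ Ioo a b, HasDerivAt E 0 z := fun z hz => by
    refine (((hu₂ z).hasDerivAt.pow 2).add
      (((hu₁ z).hasDerivAt.pow 2).const_mul (ω ^ 2))).congr_deriv ?_
    rw [hode z hz]
    ring
  have hEcont : Continuous E := by
    have := hu.continuous_deriv (by norm_num)
    fun_prop
  have hEx : E x = 0 := by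
    rw [eq_left_of_hasDerivAt_eq_zero hEcont.continuousOn hE' hx]
    simp [E, ha, ha']
  obtain ⟨h₁, h₂⟩ := (add_eq_zero_iff_of_nonneg (sq_nonneg _) (by positivity)).mp hEx
  exact ⟨by simpa [hω] using h₂, by simpa using h₁⟩

lemma hasDerivAt_sin_const_mul (ω x : ℝ) :
    HasDerivAt (fun z => sin (ω * z)) (ω * cos (ω * x)) x := by
  simpa [mul_comm] using ((hasDerivAt_id x).const_mul ω).sin

lemma hasDerivAt_cos_const_mul (ω x : ℝ) :
    HasDerivAt (fun z => cos (ω * z)) (-(ω * sin (ω * x))) x := by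
  simpa [mul_comm] using ((hasDerivAt_id x).const_mul ω).cos

lemma deriv_sin_const_mul (ω : ℝ) :
    deriv (fun z => sin (ω * z)) = fun z => ω * cos (ω * z) :=
  funext fun x => (hasDerivAt_sin_const_mul ω x).deriv

lemma deriv_deriv_sin_const_mul (ω : ℝ) :
    deriv (deriv fun z => sin (ω * z)) = fun z => -ω ^ 2 * sin (ω * z) := by
  rw [deriv_sin_const_mul]
  funext x
  rw [((hasDerivAt_cos_const_mul ω x).const_mul ω).deriv]
  ring

lemma eq_mul_sin_of_deriv_deriv_eq_neg_sq_mul {φ : ℝ → ℝ} {ω d x : ℝ} (hω : ω ≠ 0)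
    (hφ : ContDiff ℝ 2 φ) (hode : ∀ z ∈ Ioo 0 d, deriv (deriv φ) z = -ω ^ 2 * φ z)
    (h0 : φ 0 = 0) (hx : x ∈ Icc 0 d) :
    φ x = deriv φ 0 / ω * sin (ω * x) ∧ deriv φ x = deriv φ 0 * cos (ω * x) := by
  set C := deriv φ 0 / ω
  set u : ℝ → ℝ := fun z => φ z - C * sin (ω * z)
  have hsin : ContDiff ℝ 2 (fun z => C * sin (ω * z)) := by fun_prop
  have hu' : deriv u = fun z => deriv φ z - C * (ω * cos (ω * z)) := by
    funext z
    rw [deriv_fun_sub (hφ.differentiable (by norm_num) z) (hsin.differentiable (by norm_num) z),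
      deriv_const_mul _ (hasDerivAt_sin_const_mul ω z).differentiableAt,
      deriv_sin_const_mul]
  have hu'' : ∀ z ∈ Ioo 0 d, deriv (deriv u) z = -ω ^ 2 * u z := fun z hz => by
    rw [hu', ((hφ.differentiable_deriv_two z).hasDerivAt.fun_sub
      (((hasDerivAt_cos_const_mul ω z).const_mul ω).const_mul C)).deriv, hode z hz]
    ring
  have hu0' : deriv u 0 = 0 := by
    simp only [hu', mul_zero, cos_zero, mul_one, C]
    field_simp
    ring
  obtain ⟨hux, hu'x⟩ :=
    eq_zero_of_deriv_deriv_eq_neg_sq_mul hω (hφ.sub hsin) hu'' (by simp [h0]) hu0' hx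
  rw [hu'] at hu'x
  have hCω : C * ω = deriv φ 0 := div_mul_cancel₀ _ hω
  constructor
  · linear_combination hux
  · linear_combination hu'x + cos (ω * x) * hCω

lemma exists_mem_Icc_sin_const_mul_ne_zero {ω d : ℝ} (hω : 0 < ω) (hd : 0 < d) :
    ∃ z ∈ Icc 0 d, sin (ω * z) ≠ 0 := by
  set z := min d (π / (2 * ω))
  have hz : 0 < z := lt_min hd (by positivity)
  refine ⟨z, ⟨hz.le, min_le_left _ _⟩, (sin_pos_of_pos_of_lt_pi (by positivity) ?_).ne'⟩
  calc ω * z ≤ ω * (π / (2 * ω)) := mul_le_mul_of_nonneg_left (min_le_right _ _) hω.le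
    _ = π / 2 := by field_simp
    _ < π := by linarith [pi_pos]

theorem stmt_7_general (b d μ κ : ℝ) (hd : 0 < d) (hbμ : 0 < b + μ) :
    (∃ φ : ℝ → ℝ, ContDiff ℝ 2 φ ∧ (¬ ∀ z ∈ Set.Icc (0:ℝ) d, φ z = 0) ∧
      (∀ z ∈ Set.Ioo (0:ℝ) d, -(deriv (deriv φ) z) - b * φ z = μ * φ z) ∧
      φ 0 = 0 ∧ deriv φ d = κ * φ d) ↔
    Real.sqrt (b + μ) * Real.cos (Real.sqrt (b + μ) * d)
      = κ * Real.sin (Real.sqrt (b + μ) * d) := by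
  set ω := √(b + μ)
  have hω : 0 < ω := sqrt_pos.2 hbμ
  have hω2 : ω ^ 2 = b + μ := sq_sqrt hbμ.le
  constructor
  · rintro ⟨φ, hφ, hnt, hode, h0, hbc⟩
    have hsol := fun x (hx : x ∈ Icc 0 d) => eq_mul_sin_of_deriv_deriv_eq_neg_sq_mul hω.ne' hφ
      (fun z hz => by rw [hω2]; linarith [hode z hz]) h0 hx
    have hC : deriv φ 0 ≠ 0 := fun hC => hnt fun z hz => by simp [(hsol z hz).1, hC]
    obtain ⟨hφd, hφ'd⟩ := hsol d ⟨hd.le, le_rfl⟩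
    rw [hφd, hφ'd] at hbc
    field_simp at hbc
    exact hbc
  · intro h
    obtain ⟨z, hz, hsin⟩ := exists_mem_Icc_sin_const_mul_ne_zero hω hd
    refine ⟨fun z => sin (ω * z), by fun_prop, fun hall => hsin (hall z hz), fun z _ => ?_,
      by simp, ?_⟩
    · rw [deriv_deriv_sin_const_mul, hω2]
      ring
    · rw [deriv_sin_const_mul]
      exact h

theorem stmt_7 (b d μ κ : ℝ) (hb : 0 < b) (hd : 0 < d) (hbμ : 0 < b + μ) :
    (∃ φ : ℝ → ℝ, ContDiff ℝ 2 φ ∧ (¬ ∀ z ∈ Set.Icc (0:ℝ) d, φ z = 0) ∧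
      (∀ z ∈ Set.Ioo (0:ℝ) d, -(deriv (deriv φ) z) - b * φ z = μ * φ z) ∧
      φ 0 = 0 ∧ deriv φ d = κ * φ d) ↔
    Real.sqrt (b + μ) * Real.cos (Real.sqrt (b + μ) * d)
      = κ * Real.sin (Real.sqrt (b + μ) * d) :=
  stmt_7_general b d μ κ hd hbμ
end
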